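/- arXiv:1705.07437 — 8 statements merged into one kernel-verified Lean document; each statement's English description precedes it below -/
import Mathlib

section
/- Let S ⊆ 𝔽₂ⁿ and let e be a coloop of S. If the contraction S/e is powerful, then S is powerful. -/
/-- A finite set `S` of vectors in `𝔽₂ⁿ` is *powerful* if for every subset `X` of the
coordinate positions, the number of vectors in `S` that are zero at every position in `X`
is a power of 2. -/
def IsPowerful {n : ℕ} (S : Finset (Fin n → ZMod 2)) : Prop :=
  ∀ X : Finset (Fin n), ∃ d : ℕ, (S.filter (fun v => ∀ i ∈ X, v i = 0)).card = 2 ^ d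

/-- The contraction `S/e`: take the vectors of `S` that are `0` at position `e` and delete
the coordinate `e` from each of them. -/
def contract {n : ℕ} (S : Finset (Fin (n + 1) → ZMod 2)) (e : Fin (n + 1)) :
    Finset (Fin n → ZMod 2) :=
  (S.filter (fun v => v e = 0)).image (fun v => v ∘ e.succAbove)

/-- A position `e` is a *coloop* of `S` if for every `v ∈ S`, the vector obtained from `v`
by flipping its entry at position `e` also belongs to `S`. -/
def IsColoop {n : ℕ} (S : Finset (Fin n → ZMod 2)) (e : Fin n) : Prop :=
  ∀ v ∈ S, Function.update v e (v e + 1) ∈ S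

/-!
Fix `X` and split the vectors of `S` vanishing on `X` according to their entry at `e`. Those
with entry `0` correspond bijectively, by deleting coordinate `e`, to the vectors of `S/e`
vanishing on `X ∖ {e}`, so there are `2 ^ d` of them. If `e ∈ X` there are no others; otherwise
flipping coordinate `e` maps the vectors of `S` vanishing on `X` to themselves, since `e` is a
coloop, and exchanges the two halves, giving `2 ^ (d + 1)` vectors in total.
-/

open Finset

variable {n : ℕ}

def zerosOn (S : Finset (Fin n → ZMod 2)) (X : Finset (Fin n)) : Finset (Fin n → ZMod 2) :=
  S.filter fun v => ∀ i ∈ X, v i = 0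

theorem isPowerful_iff (S : Finset (Fin n → ZMod 2)) :
    IsPowerful S ↔ ∀ X, ∃ d : ℕ, (zerosOn S X).card = 2 ^ d :=
  Iff.rfl

@[simp]
theorem mem_zerosOn {S : Finset (Fin n → ZMod 2)} {X : Finset (Fin n)} {v : Fin n → ZMod 2} :
    v ∈ zerosOn S X ↔ v ∈ S ∧ ∀ i ∈ X, v i = 0 :=
  mem_filter

namespace IsColoop

variable {S : Finset (Fin n → ZMod 2)} {e : Fin n}

theorem zerosOn (he : IsColoop S e) {X : Finset (Fin n)} (heX : e ∉ X) :
    IsColoop (zerosOn S X) e := by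
  intro v hv
  rw [mem_zerosOn] at hv ⊢
  refine ⟨he v hv.1, fun i hi => ?_⟩
  rw [Function.update_of_ne (ne_of_mem_of_not_mem hi heX)]
  exact hv.2 i hi

theorem card_eq_two_mul_card_filter (he : IsColoop S e) :
    S.card = 2 * (S.filter fun v => v e = 0).card := by
  let flip : (Fin n → ZMod 2) → (Fin n → ZMod 2) := fun v => Function.update v e (v e + 1)
  have flip_flip : ∀ v, flip (flip v) = v := fun v => by
    simp only [flip, Function.update_idem, Function.update_self, CharTwo.add_cancel_right,
      Function.update_eq_self]
  have flip_apply : ∀ v, flip v e = 0 ↔ ¬ v e = 0 := fun v => by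
    simp only [flip, Function.update_self]
    generalize v e = x
    revert x
    decide
  have maps : Set.MapsTo flip ↑(S.filter fun v => v e = 0) ↑(S.filter fun v => ¬ v e = 0) :=
    fun v hv => by
      simp only [coe_filter, Set.mem_ofPred_eq] at hv ⊢
      exact ⟨he v hv.1, (flip_apply v).not.mpr (not_not.mpr hv.2)⟩
  have maps' : Set.MapsTo flip ↑(S.filter fun v => ¬ v e = 0) ↑(S.filter fun v => v e = 0) :=
    fun v hv => by
      simp only [coe_filter, Set.mem_ofPred_eq] at hv ⊢
      exact ⟨he v hv.1, (flip_apply v).mpr hv.2⟩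
  have halves : (S.filter fun v => ¬ v e = 0).card = (S.filter fun v => v e = 0).card :=
    card_nbij' flip flip maps' maps (fun v _ => flip_flip v) (fun v _ => flip_flip v)
  rw [← card_filter_add_card_filter_not (fun v => v e = 0), halves, two_mul]

end IsColoop

theorem injOn_comp_succAbove {α : Type*} (e : Fin (n + 1)) (a : α) :
    Set.InjOn (fun v : Fin (n + 1) → α => v ∘ e.succAbove) {v | v e = a} := by
  intro v hv w hw hvw
  rw [← Fin.insertNth_self_removeNth e v, ← Fin.insertNth_self_removeNth e w]
  exact congrArg₂ (Fin.insertNth e) (hv.trans hw.symm) hvw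

theorem forall_mem_eq_zero_iff_comp_succAbove {M : Type*} [Zero M] {v : Fin (n + 1) → M}
    {e : Fin (n + 1)}
    (hv : v e = 0) (X : Finset (Fin (n + 1))) :
    (∀ i ∈ X, v i = 0) ↔
      ∀ j ∈ X.preimage e.succAbove Fin.succAbove_right_injective.injOn, (v ∘ e.succAbove) j = 0 := by
  rw [Fin.forall_iff_succAbove e]
  simp [hv]

theorem card_filter_zerosOn_eq_card_zerosOn_contract (S : Finset (Fin (n + 1) → ZMod 2))
    (e : Fin (n + 1)) (X : Finset (Fin (n + 1))) :
    ((zerosOn S X).filter fun v => v e = 0).card =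
      (zerosOn (contract S e) (X.preimage e.succAbove Fin.succAbove_right_injective.injOn)).card := by
  have hfilter : (zerosOn S X).filter (fun v => v e = 0) =
      ((S.filter fun v => v e = 0).filter fun v =>
        ∀ j ∈ X.preimage e.succAbove Fin.succAbove_right_injective.injOn,
          (v ∘ e.succAbove) j = 0) := by
    ext v
    simp only [mem_filter, mem_zerosOn]
    constructor
    · rintro ⟨⟨hS, hX⟩, he⟩
      exact ⟨⟨hS, he⟩, (forall_mem_eq_zero_iff_comp_succAbove he X).mp hX⟩
    · rintro ⟨⟨hS, he⟩, hX⟩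
      exact ⟨⟨hS, (forall_mem_eq_zero_iff_comp_succAbove he X).mpr hX⟩, he⟩
  rw [hfilter, zerosOn, contract, filter_image, card_image_of_injOn]
  exact (injOn_comp_succAbove e 0).mono fun v hv => (mem_filter.mp (mem_filter.mp hv).1).2

/-- If `e` is a coloop of `S` and `S/e` is powerful, then `S` is powerful. -/
theorem powerful_of_coloop_contract_powerful {n : ℕ} (S : Finset (Fin (n + 1) → ZMod 2))
    (e : Fin (n + 1)) (he : IsColoop S e) (h : IsPowerful (contract S e)) :
    IsPowerful S := by
  rw [isPowerful_iff] at h ⊢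
  intro X
  obtain ⟨d, hd⟩ := h (X.preimage e.succAbove Fin.succAbove_right_injective.injOn)
  rw [← card_filter_zerosOn_eq_card_zerosOn_contract] at hd
  by_cases heX : e ∈ X
  · refine ⟨d, ?_⟩
    rwa [filter_true_of_mem fun v hv => (mem_zerosOn.mp hv).2 e heX] at hd
  · exact ⟨d + 1, by rw [(he.zerosOn heX).card_eq_two_mul_card_filter, hd, pow_succ']⟩
end

section
/- Let S ⊆ 𝔽₂ⁿ and let e be a coloop of S. If the contraction S/e is a linear subspace of 𝔽₂^{n-1}, then S is a linear subspace of 𝔽₂ⁿ. -/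
/-- A set `S ⊆ 𝔽₂ⁿ` is *linear* if it is the underlying set of a linear subspace over `𝔽₂`. -/
def IsLinear {n : ℕ} (S : Finset (Fin n → ZMod 2)) : Prop :=
  ∃ W : Submodule (ZMod 2) (Fin n → ZMod 2), (S : Set (Fin n → ZMod 2)) = W

/-! A coloop `e` makes membership in `S` independent of the `e`-th coordinate, so `S` is the
preimage of `S/e` under the linear map deleting that coordinate; the preimage of a subspace
under a linear map is a subspace. -/

open Function

theorem mem_contract_iff {n : ℕ} {S : Finset (Fin (n + 1) → ZMod 2)} {e : Fin (n + 1)}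
    {u : Fin n → ZMod 2} : u ∈ contract S e ↔ e.insertNth 0 u ∈ S := by
  simp only [contract, Finset.mem_image, Finset.mem_filter]
  constructor
  · rintro ⟨v, ⟨hv, hve⟩, rfl⟩
    rw [← hve]
    exact (Fin.insertNth_self_removeNth e v).symm ▸ hv
  · exact fun hu ↦ ⟨_, ⟨hu, Fin.insertNth_apply_same ..⟩, Fin.insertNth_comp_succAbove ..⟩

namespace IsColoop

variable {n : ℕ} {S : Finset (Fin n → ZMod 2)} {e : Fin n}

theorem update_mem (he : IsColoop S e) {v : Fin n → ZMod 2} (hv : v ∈ S) (a : ZMod 2) :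
    update v e a ∈ S := by
  have h : a = v e ∨ a = v e + 1 := by
    generalize v e = b
    revert a b
    decide
  rcases h with rfl | rfl
  · rwa [update_eq_self]
  · exact he v hv

theorem update_mem_iff (he : IsColoop S e) (v : Fin n → ZMod 2) (a : ZMod 2) :
    update v e a ∈ S ↔ v ∈ S :=
  ⟨fun h ↦ by simpa using he.update_mem h (v e), fun hv ↦ he.update_mem hv a⟩

end IsColoop

theorem IsColoop.mem_iff_removeNth_mem_contract {n : ℕ} {S : Finset (Fin (n + 1) → ZMod 2)}
    {e : Fin (n + 1)} (he : IsColoop S e) (v : Fin (n + 1) → ZMod 2) :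
    v ∈ S ↔ e.removeNth v ∈ contract S e := by
  rw [mem_contract_iff, Fin.insertNth_removeNth, he.update_mem_iff]

/-- If `e` is a coloop of `S` and `S/e` is linear, then `S` is linear. -/
theorem linear_of_coloop_contract_linear {n : ℕ} (S : Finset (Fin (n + 1) → ZMod 2))
    (e : Fin (n + 1)) (he : IsColoop S e) (h : IsLinear (contract S e)) :
    IsLinear S := by
  obtain ⟨W, hW⟩ := h
  refine ⟨W.comap (LinearMap.funLeft (ZMod 2) (ZMod 2) e.succAbove), Set.ext fun v ↦ ?_⟩
  rw [Finset.mem_coe, he.mem_iff_removeNth_mem_contract, ← Finset.mem_coe, hW]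
  rfl
end

section
/- Let S ⊆ 𝔽₂ⁿ be a powerful set and let v ∈ S be a nonzero vector. Then the near-frame extension S+□∖v ⊆ 𝔽₂^{n+1} is powerful. -/
/-- The near-frame extension `S+□∖v ⊆ 𝔽₂^{n+1}`: the zero vector and `v` are each extended
by a new last coordinate `0`, and every other vector of `S` is extended by a new last
coordinate `1`. -/
def nearFrame {n : ℕ} (S : Finset (Fin n → ZMod 2)) (v : Fin n → ZMod 2) :
    Finset (Fin (n + 1) → ZMod 2) :=
  S.image (fun w => if w = 0 ∨ w = v then Fin.snoc w 0 else Fin.snoc w 1)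

/-! Dropping the new last coordinate is injective on `S+□∖v`. A coordinate set `X` avoiding the
new coordinate therefore sees exactly the vectors of `S` that vanish on `X`, a power of two by
hypothesis; if `X` contains the new coordinate, only the lifts of `0` and `v` can vanish on `X`,
and `0` always does, so the count is `1` or `2`. -/

open Finset

theorem IsPowerful.zero_mem {n : ℕ} {S : Finset (Fin n → ZMod 2)} (hS : IsPowerful S) :
    0 ∈ S := by
  obtain ⟨d, hd⟩ := hS univ
  obtain ⟨w, hw⟩ := card_pos.mp (hd ▸ Nat.two_pow_pos d)
  rw [mem_filter] at hw
  exact (show w = 0 from funext fun i => hw.2 i (mem_univ i)) ▸ hw.1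

section Snoc

variable {α : Type*} [Zero α] {n : ℕ}

theorem Fin.forall_mem_snoc_eq_zero_iff (X : Finset (Fin (n + 1))) (w : Fin n → α) (a : α) :
    (∀ i ∈ X, (Fin.snoc w a : Fin (n + 1) → α) i = 0) ↔
      (Fin.last n ∈ X → a = 0) ∧
        ∀ i ∈ X.preimage Fin.castSucc (Fin.castSucc_injective n).injOn, w i = 0 := by
  simp only [Fin.forall_fin_succ' (P := fun i => i ∈ X → (Fin.snoc w a : Fin (n + 1) → α) i = 0),
    mem_preimage, Fin.snoc_castSucc, Fin.snoc_last]
  exact and_comm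

theorem card_filter_image_snoc [DecidableEq α] (S : Finset (Fin n → α))
    (c : (Fin n → α) → α) (X : Finset (Fin (n + 1))) :
    #{u ∈ S.image (fun w => (Fin.snoc w (c w) : Fin (n + 1) → α)) | ∀ i ∈ X, u i = 0} =
      #{w ∈ S | (Fin.last n ∈ X → c w = 0) ∧
        ∀ i ∈ X.preimage Fin.castSucc (Fin.castSucc_injective n).injOn, w i = 0} := by
  rw [filter_image, card_image_of_injective _ fun a b h => by
    simpa only [Fin.init_snoc] using congrArg Fin.init h]
  exact congrArg card (filter_congr fun w _ => Fin.forall_mem_snoc_eq_zero_iff X w (c w))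

end Snoc

theorem nearFrame_eq_image_snoc {n : ℕ} (S : Finset (Fin n → ZMod 2)) (v : Fin n → ZMod 2) :
    nearFrame S v =
      S.image fun w => (Fin.snoc w (if w = 0 ∨ w = v then 0 else 1) : Fin (n + 1) → ZMod 2) := by
  simp only [nearFrame, apply_ite (Fin.snoc _)]

/-- If `S` is powerful and `v ∈ S` is nonzero, then the near-frame extension `S+□∖v`
is powerful. -/
theorem nearFrame_powerful {n : ℕ} (S : Finset (Fin n → ZMod 2)) (v : Fin n → ZMod 2)
    (hv : v ∈ S) (hv0 : v ≠ 0) (hS : IsPowerful S) : IsPowerful (nearFrame S v) := by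
  intro X
  set X' := X.preimage Fin.castSucc (Fin.castSucc_injective n).injOn
  rw [nearFrame_eq_image_snoc, card_filter_image_snoc]
  by_cases hlast : Fin.last n ∈ X
  · have hpair : {w ∈ S |
          (Fin.last n ∈ X → (if w = 0 ∨ w = v then 0 else 1 : ZMod 2) = 0) ∧ ∀ i ∈ X', w i = 0} =
        {w ∈ ({0, v} : Finset (Fin n → ZMod 2)) | ∀ i ∈ X', w i = 0} := by
      ext w
      simp only [mem_filter, hlast, forall_const, ite_eq_left_iff, one_ne_zero, imp_false, not_not,
        mem_insert, mem_singleton]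
      constructor
      · exact fun ⟨_, h0v, hX⟩ => ⟨h0v, hX⟩
      · rintro ⟨rfl | rfl, hX⟩
        exacts [⟨hS.zero_mem, Or.inl rfl, hX⟩, ⟨hv, Or.inr rfl, hX⟩]
    rw [hpair, filter_insert, if_pos fun i _ => Pi.zero_apply i, filter_singleton]
    by_cases hvX : ∀ i ∈ X', v i = 0
    · exact ⟨1, by rw [if_pos hvX, card_pair hv0.symm, pow_one]⟩
    · exact ⟨0, by rw [if_neg hvX, insert_empty, card_singleton, pow_zero]⟩
  · simpa only [hlast, false_imp_iff, true_and] using hS X'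
end

section
/- Let T ⊆ 𝔽₂ⁿ. Then T is powerful if and only if the star extension T+⋆ ⊆ 𝔽₂^{n+1} is powerful. -/
/-- The star extension `T+⋆ ⊆ 𝔽₂^{n+1}`: each vector of `T` extended by a new last
coordinate `0`, together with each vector not in `T` extended by a new last coordinate `1`. -/
def starExt {n : ℕ} (T : Finset (Fin n → ZMod 2)) : Finset (Fin (n + 1) → ZMod 2) :=
  T.image (fun v => Fin.snoc v 0) ∪ Tᶜ.image (fun v => Fin.snoc v 1)

/-!
Split the coordinate set `X ⊆ [n+1]` according to whether it contains the new last coordinate.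
If it does, the vectors of `T+⋆` vanishing on `X` are exactly the vectors of `T` vanishing on
the old coordinates of `X`, padded by `0`. If it does not, they come from `T` and from its
complement alike, so together they are all `2 ^ (n - |X|)` vectors of `𝔽₂ⁿ` vanishing there.
-/

open Finset

theorem card_filter_forall_mem_eq_zero {ι R : Type*} [Fintype ι] [DecidableEq ι] [Fintype R]
    [Zero R] (X : Finset ι) [DecidablePred fun v : ι → R => ∀ i ∈ X, v i = 0] :
    #{v : ι → R | ∀ i ∈ X, v i = 0} = Fintype.card R ^ #Xᶜ := by
  have hpi : ({v : ι → R | ∀ i ∈ X, v i = 0} : Finset _) =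
      Fintype.piFinset fun i => if i ∈ X then {0} else univ := by
    ext v
    simp only [mem_filter, mem_univ, true_and, Fintype.mem_piFinset]
    refine forall_congr' fun i => ?_
    split_ifs with h <;> simp [h]
  rw [hpi, Fintype.card_piFinset]
  simp only [apply_ite, card_singleton, card_univ]
  rw [prod_ite, prod_const_one, one_mul, prod_const, filter_not, filter_mem_eq_inter, univ_inter,
    compl_eq_univ_sdiff]

theorem card_filter_add_card_compl_filter {α : Type*} [Fintype α] [DecidableEq α]
    (s : Finset α) (p : α → Prop) [DecidablePred p] :
    #(s.filter p) + #(sᶜ.filter p) = #(univ.filter p) := by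
  rw [← card_union_of_disjoint (disjoint_filter_filter disjoint_compl_right), ← filter_union,
    union_compl]

namespace Fin

variable {n : ℕ} {α : Type*} [Zero α]

theorem forall_mem_snoc_eq_zero_iff_s7 (X : Finset (Fin (n + 1))) (v : Fin n → α) (c : α) :
    (∀ i ∈ X, (snoc v c : Fin (n + 1) → α) i = 0) ↔
      (last n ∈ X → c = 0) ∧
        ∀ i ∈ X.preimage castSucc (castSucc_injective n).injOn, v i = 0 := by
  rw [forall_fin_succ', and_comm]
  simp

theorem card_filter_image_snoc [DecidableEq α] (T : Finset (Fin n → α)) (c : α)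
    (X : Finset (Fin (n + 1))) :
    #((T.image fun v => (snoc v c : Fin (n + 1) → α)).filter fun w => ∀ i ∈ X, w i = 0) =
      if last n ∈ X → c = 0 then
        #(T.filter fun v => ∀ i ∈ X.preimage castSucc (castSucc_injective n).injOn, v i = 0)
      else 0 := by
  rw [filter_image, card_image_of_injective _ (snoc_left_injective (α := fun _ => α) c)]
  simp only [forall_mem_snoc_eq_zero_iff_s7]
  split_ifs with h
  · simp only [and_iff_right h]
  · simp only [h, false_and, filter_false, card_empty]

theorem preimage_castSucc_insert_last_map (X : Finset (Fin n)) :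
    (insert (last n) (X.map castSuccEmb)).preimage castSucc (castSucc_injective n).injOn = X := by
  ext i
  simp [(castSucc_lt_last i).ne]

end Fin

theorem card_filter_starExt {n : ℕ} (T : Finset (Fin n → ZMod 2)) (X : Finset (Fin (n + 1))) :
    #((starExt T).filter fun w => ∀ i ∈ X, w i = 0) =
      #(T.filter fun v =>
          ∀ i ∈ X.preimage Fin.castSucc (Fin.castSucc_injective n).injOn, v i = 0) +
        if Fin.last n ∈ X then 0
        else #(Tᶜ.filter fun v =>
          ∀ i ∈ X.preimage Fin.castSucc (Fin.castSucc_injective n).injOn, v i = 0) := by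
  have hdisj : Disjoint (T.image fun v => (Fin.snoc v 0 : Fin (n + 1) → ZMod 2))
      (Tᶜ.image fun v => Fin.snoc v 1) := by
    simp only [disjoint_left, mem_image, not_exists, not_and]
    rintro _ ⟨u, -, rfl⟩ v - h
    simpa using (congrFun h (Fin.last n)).symm
  rw [starExt, filter_union, card_union_of_disjoint (disjoint_filter_filter hdisj),
    Fin.card_filter_image_snoc, Fin.card_filter_image_snoc]
  simp

/-- `T` is powerful if and only if the star extension `T+⋆` is powerful. -/
theorem powerful_iff_starExt_powerful {n : ℕ} (T : Finset (Fin n → ZMod 2)) :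
    IsPowerful T ↔ IsPowerful (starExt T) := by
  constructor
  · intro hT X
    rw [card_filter_starExt]
    by_cases hX : Fin.last n ∈ X
    · simpa only [hX, if_true, add_zero] using hT _
    · rw [if_neg hX, card_filter_add_card_compl_filter]
      exact ⟨_, by rw [card_filter_forall_mem_eq_zero, ZMod.card]⟩
  · intro hS X
    -- adding the last coordinate discards the padded complement of `T`
    obtain ⟨d, hd⟩ := hS (insert (Fin.last n) (X.map Fin.castSuccEmb))
    rw [card_filter_starExt, if_pos (mem_insert_self _ _), add_zero,
      Fin.preimage_castSucc_insert_last_map] at hd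
    exact ⟨d, hd⟩
end

section
/- Let S ⊆ 𝔽₂ⁿ and let e be a coordinate position. Then S is powerful if and only if the parallel extension S^∥e ⊆ 𝔽₂^{n+1} is powerful. -/
/-- The parallel extension `S^∥e ⊆ 𝔽₂^{n+1}`: append to each vector `v ∈ S` a new last
coordinate equal to `v e` (duplicating the coordinate `e`). -/
def parallelExt {n : ℕ} (S : Finset (Fin n → ZMod 2)) (e : Fin n) :
    Finset (Fin (n + 1) → ZMod 2) :=
  S.image (fun v => Fin.snoc v (v e))

open Finset Function

lemma card_filter_image_comp {ι κ R : Type*} [Zero R] [DecidableEq (ι → R)]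
    {f : ι → κ} (hf : Surjective f) (S : Finset (κ → R)) (X : Finset ι)
    [DecidablePred fun w : ι → R => ∀ i ∈ X, w i = 0]
    [DecidablePred fun v : κ → R => ∀ i ∈ X, v (f i) = 0] :
    #{w ∈ S.image (· ∘ f) | ∀ i ∈ X, w i = 0} = #{v ∈ S | ∀ i ∈ X, v (f i) = 0} := by
  rw [filter_image, card_image_of_injective _ hf.injective_comp_right]
  exact congrArg card (filter_congr fun _ _ => Iff.rfl)

theorem isPowerful_image_comp_iff {m n : ℕ} {f : Fin m → Fin n} (hf : Surjective f)
    (S : Finset (Fin n → ZMod 2)) : IsPowerful (S.image (· ∘ f)) ↔ IsPowerful S := by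
  simp only [IsPowerful, card_filter_image_comp hf]
  constructor
  · intro h Y
    obtain ⟨d, hd⟩ := h {i | f i ∈ Y}
    refine ⟨d, hd ▸ congrArg card (filter_congr fun v _ => ?_)⟩
    simp [hf.forall]
  · intro h X
    obtain ⟨d, hd⟩ := h (X.image f)
    exact ⟨d, hd ▸ by simp⟩

lemma surjective_snoc_id {n : ℕ} (e : Fin n) : Surjective (Fin.snoc id e : Fin (n + 1) → Fin n) :=
  fun j => ⟨j.castSucc, Fin.snoc_castSucc ..⟩

lemma parallelExt_eq_image_comp {n : ℕ} (S : Finset (Fin n → ZMod 2)) (e : Fin n) :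
    parallelExt S e = S.image (· ∘ Fin.snoc id e) := by
  unfold parallelExt
  congr
  funext v
  rw [Fin.comp_snoc]
  rfl

/-- `S` is powerful if and only if the parallel extension `S^∥e` is powerful. -/
theorem powerful_iff_parallelExt_powerful {n : ℕ} (S : Finset (Fin n → ZMod 2)) (e : Fin n) :
    IsPowerful S ↔ IsPowerful (parallelExt S e) := by
  rw [parallelExt_eq_image_comp, isPowerful_image_comp_iff (surjective_snoc_id e)]
end

section
/- Let m ≤ n and let S = {u₁, u₂, …, u_m} ⊆ 𝔽₂ⁿ be a permutative set of m vectors. Then the disjunctive closure ⟨S⟩∨ is a powerful set of cardinality 2^m. -/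
/-- A family `u₁, …, u_m` of vectors in `𝔽₂ⁿ` is *permutative* if there exist `m` distinct
positions `p₁, …, p_m` such that `u i` has entry `1` at position `p j` iff `i = j`, and `0`
otherwise. -/
def IsPermutative {m n : ℕ} (u : Fin m → (Fin n → ZMod 2)) : Prop :=
  ∃ p : Fin m → Fin n, Function.Injective p ∧
    ∀ i j : Fin m, u i (p j) = if i = j then 1 else 0

/-- The disjunctive closure `⟨S⟩∨` of `S = {u₁, …, u_m}`: all vectors
`a₁u₁ ∨ ⋯ ∨ a_mu_m` with `a_i ∈ {0,1}`, where `∨` is the positionwise maximum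
(the empty disjunction being the zero vector). -/
def disjClosure {m n : ℕ} (u : Fin m → (Fin n → ZMod 2)) : Finset (Fin n → ZMod 2) :=
  Finset.univ.image (fun a : Fin m → Bool =>
    (fun j => if ∃ i, a i = true ∧ u i j = 1 then (1 : ZMod 2) else 0))

/-!
At the permutative position `p j`, the disjunction `disj u a` of the `u i` with `a i = true` has
entry `a j`; hence `a ↦ disj u a` is injective and `⟨S⟩∨` has `2 ^ m` elements. A disjunction
vanishes on `X` iff each of its terms does, so the members of `⟨S⟩∨` vanishing on `X` correspond
bijectively to the subfamilies of `T = {i | u i vanishes on X}`, and there are `2 ^ #T` of them.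
-/

open Finset

theorem card_filter_forall_eq_true_imp_mem {ι : Type*} [Fintype ι] [DecidableEq ι]
    (T : Finset ι) : #{a : ι → Bool | ∀ i, a i = true → i ∈ T} = 2 ^ #T := by
  have : ({a : ι → Bool | ∀ i, a i = true → i ∈ T} : Finset _) =
      Fintype.piFinset fun i => if i ∈ T then univ else {false} := by
    ext a
    simp only [mem_filter, mem_univ, true_and, Fintype.mem_piFinset]
    refine forall_congr' fun i => ?_
    split_ifs with h <;> simp [h]
  rw [this, Fintype.card_piFinset]
  simp [apply_ite, prod_ite_mem]

namespace DisjClosure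

variable {m n : ℕ} (u : Fin m → Fin n → ZMod 2)

def disj (a : Fin m → Bool) : Fin n → ZMod 2 :=
  fun j => if ∃ i, a i = true ∧ u i j = 1 then 1 else 0

theorem disjClosure_eq_image_disj : disjClosure u = univ.image (disj u) := rfl

theorem disj_apply_eq_zero_iff (a : Fin m → Bool) (j : Fin n) :
    disj u a j = 0 ↔ ∀ i, a i = true → u i j = 0 := by
  have zmod_two_ne_one : ∀ x : ZMod 2, x ≠ 1 ↔ x = 0 := by decide
  simp [disj, ← zmod_two_ne_one]

theorem disj_apply_of_isPermutative {p : Fin m → Fin n}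
    (hp : ∀ i j, u i (p j) = if i = j then 1 else 0) (a : Fin m → Bool) (j : Fin m) :
    disj u a (p j) = if a j = true then 1 else 0 := by
  simp [disj, hp]

theorem disj_injective_of_isPermutative (hu : IsPermutative u) : Function.Injective (disj u) := by
  obtain ⟨p, -, hp⟩ := hu
  intro a b hab
  funext j
  have h := congrFun hab (p j)
  simp only [disj_apply_of_isPermutative u hp] at h
  cases ha : a j <;> cases hb : b j <;> simp_all

variable {u}

theorem card_filter_disjClosure_vanishing (hu : Function.Injective (disj u)) (X : Finset (Fin n)) :
    #{v ∈ disjClosure u | ∀ j ∈ X, v j = 0} = 2 ^ #{i | ∀ j ∈ X, u i j = 0} := by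
  have vanishing_iff (a : Fin m → Bool) :
      (∀ j ∈ X, disj u a j = 0) ↔ ∀ i, a i = true → i ∈ ({i | ∀ j ∈ X, u i j = 0} : Finset _) := by
    simp only [disj_apply_eq_zero_iff, mem_filter, mem_univ, true_and]
    exact ⟨fun h i hi j hj => h j hj i hi, fun h j hj i hi => h i hi j hj⟩
  rw [disjClosure_eq_image_disj, filter_image, card_image_of_injective _ hu,
    filter_congr fun a _ => vanishing_iff a]
  convert card_filter_forall_eq_true_imp_mem _

theorem isPowerful_disjClosure (hu : Function.Injective (disj u)) : IsPowerful (disjClosure u) :=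
  fun X => ⟨_, card_filter_disjClosure_vanishing hu X⟩

theorem card_disjClosure (hu : Function.Injective (disj u)) : #(disjClosure u) = 2 ^ m := by
  simp [disjClosure_eq_image_disj, card_image_of_injective _ hu]

end DisjClosure

theorem disjClosure_powerful_general {m n : ℕ} (u : Fin m → (Fin n → ZMod 2))
    (hperm : IsPermutative u) :
    IsPowerful (disjClosure u) ∧ (disjClosure u).card = 2 ^ m :=
  have hinj := DisjClosure.disj_injective_of_isPermutative u hperm
  ⟨DisjClosure.isPowerful_disjClosure hinj, DisjClosure.card_disjClosure hinj⟩

/-- If `m ≤ n` and `S = {u₁, …, u_m}` is a permutative set of `m` (distinct) vectors,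
then `⟨S⟩∨` is a powerful set of cardinality `2^m`. -/
theorem disjClosure_powerful {m n : ℕ} (hmn : m ≤ n) (u : Fin m → (Fin n → ZMod 2))
    (hu : Function.Injective u) (hperm : IsPermutative u) :
    IsPowerful (disjClosure u) ∧ (disjClosure u).card = 2 ^ m :=
  disjClosure_powerful_general u hperm
end

section
/- Let m, n ≥ 1 and let Q ⊆ 𝔽₂^m and R ⊆ 𝔽₂ⁿ be powerful sets such that the mutual framing Q#R is powerful. If it is not the case that both Q and R consist only of the zero vector and possibly the all-ones vector, then Q#R is not a linear subspace of 𝔽₂^{m+n}. -/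
/-- The mutual framing `Q#R ⊆ 𝔽₂^{m+n}`: the zero vector; `u1ₙ` for each nonzero `u ∈ Q`;
`1ₘv` for each nonzero `v ∈ R`; and the all-ones vector. -/
def mutualFraming {m n : ℕ} (Q : Finset (Fin m → ZMod 2)) (R : Finset (Fin n → ZMod 2)) :
    Finset (Fin (m + n) → ZMod 2) :=
  insert 0 (insert (fun _ => 1)
    (((Q.filter (fun u => u ≠ 0)).image (fun u => Fin.append u (fun _ => 1))) ∪
     ((R.filter (fun v => v ≠ 0)).image (fun v => Fin.append (fun _ => (1 : ZMod 2)) v))))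

/-! Since `Q#R` contains the all-ones vector `1`, linearity would make it closed under
`x ↦ x + 1`. For `u ∈ Q` other than `0` and `1`, this sends `u1ₙ ∈ Q#R` to `(u + 1)0ₙ`, whose
left block is neither `0` nor `1` and whose right block is zero and nonempty (`n ≥ 1`); no
vector of `Q#R` has this shape. A vector `v ∈ R` other than `0` and `1` is handled
symmetrically, using `m ≥ 1`. -/

namespace Fin

variable {α : Type*} {m n : ℕ}

theorem append_inj_iff {u u' : Fin m → α} {v v' : Fin n → α} :
    Fin.append u v = Fin.append u' v' ↔ u = u' ∧ v = v' :=
  ((Fin.appendEquiv m n).injective.eq_iff (a := (u, v)) (b := (u', v'))).trans Prod.mk_inj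

theorem append_const (a : α) :
    Fin.append (fun _ : Fin m => a) (fun _ : Fin n => a) = fun _ => a := by
  ext i
  refine Fin.addCases (fun j => ?_) (fun j => ?_) i <;> simp

theorem append_zero_zero [Zero α] :
    Fin.append (0 : Fin m → α) (0 : Fin n → α) = 0 :=
  Fin.append_const 0

theorem append_one_one [One α] :
    Fin.append (1 : Fin m → α) (1 : Fin n → α) = 1 :=
  Fin.append_const 1

theorem append_add_append [Add α] (u u' : Fin m → α) (v v' : Fin n → α) :
    Fin.append u v + Fin.append u' v' = Fin.append (u + u') (v + v') := by
  ext i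
  refine Fin.addCases (fun j => ?_) (fun j => ?_) i <;> simp

end Fin

namespace ZMod

variable {ι : Type*}

theorem pi_one_add_one : (1 : ι → ZMod 2) + 1 = 0 :=
  funext fun _ => rfl

theorem pi_add_one_eq_zero_iff {u : ι → ZMod 2} : u + 1 = 0 ↔ u = 1 := by
  rw [add_eq_zero_iff_eq_neg, show (-1 : ι → ZMod 2) = 1 from funext fun _ => rfl]

end ZMod

theorem IsLinear.add_mem {n : ℕ} {S : Finset (Fin n → ZMod 2)} (hS : IsLinear S)
    {x y : Fin n → ZMod 2} (hx : x ∈ S) (hy : y ∈ S) : x + y ∈ S := by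
  obtain ⟨W, hW⟩ := hS
  rw [← Finset.mem_coe, hW] at hx hy ⊢
  exact W.add_mem hx hy

section MutualFraming

variable {m n : ℕ} {Q : Finset (Fin m → ZMod 2)} {R : Finset (Fin n → ZMod 2)}

theorem mem_mutualFraming {x : Fin (m + n) → ZMod 2} :
    x ∈ mutualFraming Q R ↔ x = Fin.append 0 0 ∨ x = Fin.append 1 1 ∨
      (∃ u ∈ Q, u ≠ 0 ∧ Fin.append u 1 = x) ∨ ∃ v ∈ R, v ≠ 0 ∧ Fin.append 1 v = x := by
  rw [Fin.append_zero_zero, Fin.append_one_one]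
  simp only [mutualFraming, Finset.mem_insert, Finset.mem_union, Finset.mem_image,
    Finset.mem_filter, and_assoc]
  rfl

theorem one_mem_mutualFraming : (1 : Fin (m + n) → ZMod 2) ∈ mutualFraming Q R :=
  mem_mutualFraming.2 <| .inr <| .inl Fin.append_one_one.symm

theorem append_one_mem_mutualFraming {u : Fin m → ZMod 2} (hu : u ∈ Q) (hu0 : u ≠ 0) :
    Fin.append u 1 ∈ mutualFraming Q R :=
  mem_mutualFraming.2 <| .inr <| .inr <| .inl ⟨u, hu, hu0, rfl⟩

theorem one_append_mem_mutualFraming {v : Fin n → ZMod 2} (hv : v ∈ R) (hv0 : v ≠ 0) :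
    Fin.append 1 v ∈ mutualFraming Q R :=
  mem_mutualFraming.2 <| .inr <| .inr <| .inr ⟨v, hv, hv0, rfl⟩

theorem append_zero_notMem_mutualFraming (hn : 1 ≤ n) {w : Fin m → ZMod 2} (hw0 : w ≠ 0)
    (hw1 : w ≠ 1) : Fin.append w 0 ∉ mutualFraming Q R := by
  have : Nonempty (Fin n) := ⟨⟨0, hn⟩⟩
  simp [mem_mutualFraming, Fin.append_inj_iff, hw0, hw1, eq_comm (b := (0 : Fin n → ZMod 2))]

theorem zero_append_notMem_mutualFraming (hm : 1 ≤ m) {w : Fin n → ZMod 2} (hw0 : w ≠ 0)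
    (hw1 : w ≠ 1) : Fin.append 0 w ∉ mutualFraming Q R := by
  have : Nonempty (Fin m) := ⟨⟨0, hm⟩⟩
  simp [mem_mutualFraming, Fin.append_inj_iff, hw0, hw1, eq_comm (b := (0 : Fin m → ZMod 2))]

theorem not_isLinear_mutualFraming_of_mem_left (hn : 1 ≤ n) {u : Fin m → ZMod 2} (hu : u ∈ Q)
    (hu0 : u ≠ 0) (hu1 : u ≠ 1) : ¬ IsLinear (mutualFraming Q R) := by
  intro hlin
  have hsum := hlin.add_mem (append_one_mem_mutualFraming hu hu0) one_mem_mutualFraming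
  rw [← Fin.append_one_one (m := m) (n := n), Fin.append_add_append, ZMod.pi_one_add_one] at hsum
  refine append_zero_notMem_mutualFraming hn ?_ ?_ hsum
  · rwa [Ne, ZMod.pi_add_one_eq_zero_iff]
  · rwa [Ne, add_eq_right]

theorem not_isLinear_mutualFraming_of_mem_right (hm : 1 ≤ m) {v : Fin n → ZMod 2} (hv : v ∈ R)
    (hv0 : v ≠ 0) (hv1 : v ≠ 1) : ¬ IsLinear (mutualFraming Q R) := by
  intro hlin
  have hsum := hlin.add_mem (one_append_mem_mutualFraming hv hv0) one_mem_mutualFraming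
  rw [← Fin.append_one_one (m := m) (n := n), Fin.append_add_append, ZMod.pi_one_add_one] at hsum
  refine zero_append_notMem_mutualFraming hm ?_ ?_ hsum
  · rwa [Ne, ZMod.pi_add_one_eq_zero_iff]
  · rwa [Ne, add_eq_right]

end MutualFraming

theorem mutualFraming_nonlinear_general {m n : ℕ} (hm : 1 ≤ m) (hn : 1 ≤ n)
    (Q : Finset (Fin m → ZMod 2)) (R : Finset (Fin n → ZMod 2))
    (hnotriv : ¬ (Q ⊆ {0, fun _ => 1} ∧ R ⊆ {0, fun _ => 1})) :
    ¬ IsLinear (mutualFraming Q R) := by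
  rcases not_and_or.mp hnotriv with hQ | hR
  · obtain ⟨u, hu, hu01⟩ := Finset.not_subset.mp hQ
    simp only [Finset.mem_insert, Finset.mem_singleton, not_or] at hu01
    exact not_isLinear_mutualFraming_of_mem_left hn hu hu01.1 hu01.2
  · obtain ⟨v, hv, hv01⟩ := Finset.not_subset.mp hR
    simp only [Finset.mem_insert, Finset.mem_singleton, not_or] at hv01
    exact not_isLinear_mutualFraming_of_mem_right hm hv hv01.1 hv01.2

/-- If `Q` and `R` are powerful, `Q#R` is powerful, and it is not the case that both `Q`
and `R` consist only of the zero vector and possibly the all-ones vector, then `Q#R` is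
not linear. -/
theorem mutualFraming_nonlinear {m n : ℕ} (hm : 1 ≤ m) (hn : 1 ≤ n)
    (Q : Finset (Fin m → ZMod 2)) (R : Finset (Fin n → ZMod 2))
    (hQ : IsPowerful Q) (hR : IsPowerful R) (hQR : IsPowerful (mutualFraming Q R))
    (hnotriv : ¬ (Q ⊆ {0, fun _ => 1} ∧ R ⊆ {0, fun _ => 1})) :
    ¬ IsLinear (mutualFraming Q R) :=
  mutualFraming_nonlinear_general hm hn Q R hnotriv
end

section
/- Every powerful set is determined by its minimal nonempty members: if S and S' are powerful subsets of 2^E (for the same finite ground set E) with S_min = S'_min, then S = S'. -/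
/-!
Compare `S` and `S'` on a set `A` by strong induction, assuming they agree on all proper subsets
of `A`. Taking `X = Aᶜ`, the number of members of a powerful set contained in `A` is a power of 2.
If `A ∈ S \ S'`, these counts for `S` and `S'` differ by exactly one, and `2 ^ d = 2 ^ e + 1`
forces `2 ^ d = 2`. Since `∅` lies in every powerful set, the members of `S` below `A` are then
just `∅` and `A`, so `A ∈ S_min = S'_min ⊆ S'`, a contradiction.
-/

def IsPowerfulSet {E : Type*} [Fintype E] [DecidableEq E] (S : Finset (Finset E)) : Prop :=
  ∀ X : Finset E, ∃ d : ℕ, (S.filter (fun Y => Y ∩ X = ∅)).card = 2 ^ d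

/-- `S_min`: the set of minimal (under inclusion) nonempty members of `S`. -/
def minMembers {E : Type*} [DecidableEq E] (S : Finset (Finset E)) : Finset (Finset E) :=
  S.filter (fun Y => Y ≠ ∅ ∧ ∀ Z ∈ S, Z ≠ ∅ → Z ⊆ Y → Z = Y)

open Finset

namespace IsPowerfulSet

variable {E : Type*} [Fintype E] [DecidableEq E] {S : Finset (Finset E)}

theorem exists_card_filter_subset_eq_two_pow (hS : IsPowerfulSet S) (A : Finset E) :
    ∃ d : ℕ, #{Y ∈ S | Y ⊆ A} = 2 ^ d := by
  obtain ⟨d, hd⟩ := hS Aᶜ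
  refine ⟨d, Eq.trans ?_ hd⟩
  congr 1
  refine filter_congr fun Y _ => ?_
  rw [← disjoint_iff_inter_eq_empty, disjoint_compl_right_iff]

theorem empty_mem (hS : IsPowerfulSet S) : (∅ : Finset E) ∈ S := by
  obtain ⟨d, hd⟩ := hS univ
  obtain ⟨Y, hY⟩ := card_pos.mp (hd ▸ Nat.two_pow_pos d)
  rw [mem_filter, inter_univ] at hY
  exact hY.2 ▸ hY.1

end IsPowerfulSet

theorem Nat.two_pow_eq_two_of_eq_two_pow_add_one {d e : ℕ} (h : 2 ^ d = 2 ^ e + 1) :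
    2 ^ d = 2 := by
  rcases e with _ | e
  · simpa using h
  rcases d with _ | d
  · have := Nat.one_le_two_pow (n := e)
    rw [pow_succ] at h
    omega
  · rw [pow_succ, pow_succ] at h
    omega

section

variable {E : Type*} [DecidableEq E] {S S' : Finset (Finset E)} {A : Finset E}

theorem minMembers_subset (S : Finset (Finset E)) : minMembers S ⊆ S :=
  filter_subset _ _

theorem mem_minMembers_of_card_filter_subset_eq_two (hA : A ∈ S) (hA₀ : A ≠ ∅)
    (h₀ : ∅ ∈ S) (hcard : #{Y ∈ S | Y ⊆ A} = 2) : A ∈ minMembers S := by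
  have hbelow : {Y ∈ S | Y ⊆ A} = {∅, A} := by
    refine (eq_of_subset_of_card_le ?_ ?_).symm
    · simp [insert_subset_iff, hA, h₀]
    · rw [hcard, card_pair (Ne.symm hA₀)]
  refine mem_filter.mpr ⟨hA, hA₀, fun Z hZ hZ₀ hZA => ?_⟩
  have hZ' : Z ∈ ({∅, A} : Finset (Finset E)) := hbelow ▸ mem_filter.mpr ⟨hZ, hZA⟩
  simpa [hZ₀] using hZ'

theorem card_filter_subset_eq_add_one (hagree : ∀ B ⊂ A, B ∈ S ↔ B ∈ S') (hA : A ∈ S)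
    (hA' : A ∉ S') : #{Y ∈ S | Y ⊆ A} = #{Y ∈ S' | Y ⊆ A} + 1 := by
  have hinsert : {Y ∈ S | Y ⊆ A} = insert A {Y ∈ S' | Y ⊆ A} := by
    ext Y
    by_cases hYA : Y = A
    · simp [hYA, hA]
    · simp only [mem_filter, mem_insert, hYA, false_or]
      exact and_congr_left fun hsub => hagree Y (hsub.ssubset_of_ne hYA)
  rw [hinsert, card_insert_of_notMem (by simp [hA'])]

theorem mem_of_minMembers_subset_of_forall_ssubset [Fintype E] (hS : IsPowerfulSet S)
    (hS' : IsPowerfulSet S') (hmin : minMembers S ⊆ S')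
    (hagree : ∀ B ⊂ A, B ∈ S ↔ B ∈ S') (hA : A ∈ S) : A ∈ S' := by
  by_contra hA'
  have hA₀ : A ≠ ∅ := fun h => hA' (h ▸ hS'.empty_mem)
  obtain ⟨d, hd⟩ := hS.exists_card_filter_subset_eq_two_pow A
  obtain ⟨e, he⟩ := hS'.exists_card_filter_subset_eq_two_pow A
  have hde : 2 ^ d = 2 ^ e + 1 := hd ▸ he ▸ card_filter_subset_eq_add_one hagree hA hA'
  have hcard : #{Y ∈ S | Y ⊆ A} = 2 := hd.trans (Nat.two_pow_eq_two_of_eq_two_pow_add_one hde)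
  exact hA' (hmin (mem_minMembers_of_card_filter_subset_eq_two hA hA₀ hS.empty_mem hcard))

end

/-- Every powerful set is determined by its minimal nonempty members. -/
theorem powerful_determined_by_minMembers {E : Type*} [Fintype E] [DecidableEq E]
    (S S' : Finset (Finset E)) (hS : IsPowerfulSet S) (hS' : IsPowerfulSet S')
    (hmin : minMembers S = minMembers S') : S = S' := by
  ext A
  induction A using Finset.strongInduction with
  | H A ih =>
    exact ⟨mem_of_minMembers_subset_of_forall_ssubset hS hS' (hmin ▸ minMembers_subset S') ih,
      mem_of_minMembers_subset_of_forall_ssubset hS' hS (hmin ▸ minMembers_subset S)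
        fun B hB => (ih B hB).symm⟩
end
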